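/- arXiv:1611.03707 — 2 statements merged into one kernel-verified Lean document; each statement's English description precedes it below -/
import Mathlib

section
/- Let 1 ≤ r ≤ n be integers. The number of rook words a of length n with run(a) = r equals r · Σ_{j=0}^{r-1} (−1)^j · binom(r−1, j) · (n−1−j)^{n−1}. -/
open Finset

noncomputable section
open scoped Classical

/-- `a : Fin n → Fin n` encodes a word `(a_1,…,a_n) ∈ {1,…,n}^n` via `a_i = (a i) + 1`
(i.e. the `Fin n` value is the 1-based letter minus one). -/
def IsParkingFunction {n : ℕ} (a : Fin n → Fin n) : Prop :=
  ∀ i : Fin n, (i : ℕ) + 1 ≤ (Finset.univ.filter (fun j => a j ≤ i)).card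

/-- `X = {x_1 < … < x_ℓ}` is centered for `a` iff `a_{x_i} ≤ i` for all `i`, i.e. the 1-based
value at `x` is at most the rank of `x` in `X`. -/
def Centered {n : ℕ} (a : Fin n → Fin n) (X : Finset (Fin n)) : Prop :=
  ∀ x ∈ X, (a x : ℕ) + 1 ≤ (X.filter (fun y => y ≤ x)).card

/-- `z(a)`: the maximum cardinality of a centered set for `a`. -/
def zOf {n : ℕ} (a : Fin n → Fin n) : ℕ :=
  sSup {k : ℕ | ∃ X : Finset (Fin n), Centered a X ∧ X.card = k}

/-- `run(a)`: the largest `i` such that all 1-based values `1,…,i` occur in `a` (0 if none). -/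
def runOf {n : ℕ} (a : Fin n → Fin n) : ℕ :=
  ((Finset.range n).filter (fun i => ∀ j ≤ i, ∃ x : Fin n, (a x : ℕ) = j)).card

/-- `Run(a)`: the set of positions `j` that are the last occurrence of some 1-based value
`≤ run(a)`. -/
def RunSet {n : ℕ} (a : Fin n → Fin n) : Finset (Fin n) :=
  Finset.univ.filter (fun j => (a j : ℕ) < runOf a ∧ ∀ j' : Fin n, j < j' → a j' ≠ a j)

/-- A rook word: the first letter is at most `run(a)`. -/
def IsRookWord {n : ℕ} (a : Fin n → Fin n) : Prop :=
  ∃ h : 0 < n, (a ⟨0, h⟩ : ℕ) + 1 ≤ runOf a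

/-- `LegEq T k` : depth-first search from `0`, always preferring the largest unvisited neighbour,
visits exactly `k` non-root vertices before the first backtracking. -/
def LegEq {n : ℕ} (T : SimpleGraph (Fin (n + 1))) (k : ℕ) : Prop :=
  ∃ v : Fin (k + 1) → Fin (n + 1),
    v 0 = 0 ∧
    (∀ i : Fin k,
      T.Adj (v i.castSucc) (v i.succ) ∧
      (∀ j : Fin (k + 1), j ≤ i.castSucc → v i.succ ≠ v j) ∧
      (∀ w : Fin (n + 1), T.Adj (v i.castSucc) w →
        (∀ j : Fin (k + 1), j ≤ i.castSucc → w ≠ v j) → w ≤ v i.succ)) ∧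
    (∀ w : Fin (n + 1), T.Adj (v (Fin.last k)) w → ∃ j : Fin (k + 1), w = v j)

/-- `Nbr [ℓ_1,…,ℓ_m]` is the number of tuples `(x_0,…,x_m)` with `x_0 = 0` and
`x_{i-1} < x_i ≤ ℓ_1 + ⋯ + ℓ_i` for all `i`. -/
def Nbr (L : List ℤ) : ℕ :=
  Nat.card {x : Fin (L.length + 1) → ℤ //
    x 0 = 0 ∧ ∀ i : Fin L.length,
      x i.castSucc < x i.succ ∧ x i.succ ≤ (L.take ((i : ℕ) + 1)).sum}

/-- The cyclic sum `s(ℓ)` of the paper (indices of `ℓ` read modulo `k`). -/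
def cycS (k r : ℕ) (t : ℤ) (ℓ : ℕ → ℕ) : ℕ :=
  ∑ i ∈ Finset.range k,
    Nbr (((∑ j ∈ Finset.range r, (ℓ ((i + j + 1) % k) : ℤ)) + t) ::
      List.ofFn (fun p : Fin (k - r - 1) => (ℓ ((i + r + 1 + (p : ℕ)) % k) : ℤ)))

/-- `B` is the coimage of `a`: the ordered partition of positions into fibers of `a`,
ordered by increasing value. -/
def IsCoimage {n k : ℕ} (a : Fin n → Fin n) (B : Fin k → Finset (Fin n)) : Prop :=
  (∀ j, (B j).Nonempty) ∧
  (∀ x : Fin n, ∃ j, x ∈ B j) ∧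
  (∀ j j' : Fin k, ∀ x ∈ B j, ∀ y ∈ B j', (a x = a y ↔ j = j')) ∧
  (∀ j j' : Fin k, ∀ x ∈ B j, ∀ y ∈ B j', j < j' → a x < a y)

/-- `a` is of type `𝔄` iff its coimage is a cyclic rotation of `𝔄`. -/
def IsOfType {n k : ℕ} (a : Fin n → Fin n) (A : Fin k → Finset (Fin n)) : Prop :=
  ∃ s : ℕ, s < k ∧ IsCoimage a (fun j => A ⟨((j : ℕ) + s) % k, Nat.mod_lt _ j.pos⟩)

/-! Writing letters 0-based, a rook word of length `m + 1` with run `r` is a word `c :: b` with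
`c < r` in which every letter below `r` occurs and the letter `r` does not. For each of the `r`
choices of `c`, inclusion–exclusion over the letters below `r` other than `c` that the tail `b`
misses gives `∑ j, (-1)^j (r-1 choose j) (m - j)^m` tails. When `r = m + 1` the excluded letter
does not exist and `b` has `m + 1` letters available instead of `m`; both alternating sums are then
the `m`-th forward difference of `x ^ m`, i.e. `m!`. -/

theorem sum_range_neg_one_pow_mul_choose_mul_sub_pow (k : ℕ) (x : ℤ) :
    ∑ j ∈ range (k + 1), (-1) ^ j * (k.choose j : ℤ) * (x - j) ^ k = k.factorial := by
  have h := fwdDiff_iter_eq_sum_shift (h := (1 : ℤ)) (fun y : ℤ => y ^ k) k (x - k)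
  rw [fwdDiff_iter_eq_factorial] at h
  rw [← sum_range_reflect]
  simp only [Pi.natCast_apply, smul_eq_mul, nsmul_eq_mul, mul_one] at h
  rw [h]
  refine sum_congr rfl fun j hj => ?_
  rw [mem_range] at hj
  rw [show k + 1 - 1 - j = k - j by omega, Nat.choose_symm (by omega)]
  push_cast [Nat.cast_sub (show j ≤ k by omega)]
  ring

theorem card_filter_subset_image_piFinset {β α : Type*} [Fintype β] [DecidableEq β]
    [DecidableEq α] {T A : Finset α} (hTA : T ⊆ A) :
    (#{f ∈ Fintype.piFinset fun _ : β => A | T ⊆ univ.image f} : ℤ) =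
      ∑ j ∈ range (#T + 1),
        (-1) ^ j * ((#T).choose j : ℤ) * ((#A : ℤ) - j) ^ Fintype.card β := by
  set P := Fintype.piFinset fun _ : β => A
  have hmiss : ∀ S ⊆ T,
      {f ∈ P | S ⊆ T \ univ.image f} = Fintype.piFinset fun _ => A \ S := by
    intro S hS
    ext f
    simp only [P, mem_filter, Fintype.mem_piFinset, mem_sdiff, subset_iff, mem_image, mem_univ,
      true_and, not_exists]
    constructor
    · rintro ⟨hA, hSf⟩ x
      exact ⟨hA x, fun hx => (hSf hx).2 x rfl⟩
    · intro h
      exact ⟨fun x => (h x).1, fun s hs => ⟨hS hs, fun x hx => (h x).2 (hx ▸ hs)⟩⟩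
  calc (#{f ∈ P | T ⊆ univ.image f} : ℤ)
      = ∑ f ∈ P, ∑ S ∈ T.powerset, if S ⊆ T \ univ.image f then (-1) ^ #S else 0 := by
        rw [card_filter, Nat.cast_sum]
        refine sum_congr rfl fun f _ => ?_
        have : {S ∈ T.powerset | S ⊆ T \ univ.image f} = (T \ univ.image f).powerset := by
          ext S
          simp only [mem_filter, mem_powerset, and_iff_right_iff_imp]
          exact fun h => h.trans sdiff_subset
        rw [← sum_filter, this, sum_powerset_neg_one_pow_card]
        simp only [sdiff_eq_empty_iff_subset, Nat.cast_ite, Nat.cast_one, Nat.cast_zero]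
    _ = ∑ S ∈ T.powerset, (-1) ^ #S * ((#A : ℤ) - #S) ^ Fintype.card β := by
        rw [sum_comm]
        refine sum_congr rfl fun S hS => ?_
        rw [mem_powerset] at hS
        rw [← sum_filter, sum_const, hmiss S hS, Fintype.card_piFinset, prod_const, card_univ,
          card_sdiff_of_subset (hS.trans hTA), nsmul_eq_mul]
        push_cast [card_le_card (hS.trans hTA)]
        ring
    _ = _ := by
        rw [sum_powerset_apply_card (fun k => (-1) ^ k * ((#A : ℤ) - k) ^ Fintype.card β)]
        refine sum_congr rfl fun j _ => ?_
        rw [nsmul_eq_mul]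
        ring

theorem Nat.card_filter_range_forall_le_eq_find {P : ℕ → Prop} [DecidablePred P] {n : ℕ}
    (hn : ¬P n) : #{i ∈ range n | ∀ j ≤ i, P j} = Nat.find (⟨n, hn⟩ : ∃ k, ¬P k) := by
  rw [← card_range (Nat.find (⟨n, hn⟩ : ∃ k, ¬P k))]
  congr 1
  ext i
  simp only [mem_filter, mem_range, Nat.lt_find_iff, not_not]
  exact ⟨And.right, fun h => ⟨not_le.1 fun hni => hn (h n hni), h⟩⟩

theorem runOf_eq_iff {n r : ℕ} (a : Fin n → Fin n) :
    runOf a = r ↔ (∀ j < r, ∃ x, (a x : ℕ) = j) ∧ ∀ x, (a x : ℕ) ≠ r := by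
  have hn : ¬∃ x, (a x : ℕ) = n := fun ⟨x, hx⟩ => (a x).isLt.ne hx
  rw [runOf, Nat.card_filter_range_forall_le_eq_find hn, Nat.find_eq_iff, and_comm]
  simp only [not_not]
  simp only [not_exists, ne_eq]

theorem isRookWord_and_runOf_eq_iff {m r : ℕ} (a : Fin (m + 1) → Fin (m + 1)) :
    IsRookWord a ∧ runOf a = r ↔ (a 0 : ℕ) < r ∧ runOf a = r := by
  constructor
  · rintro ⟨⟨_, h⟩, hr⟩
    exact ⟨hr ▸ h, hr⟩
  · rintro ⟨h, hr⟩
    exact ⟨⟨m.succ_pos, hr ▸ h⟩, hr⟩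

theorem Fin.natCard_subtype_eq_sum_cons {α : Type*} [Fintype α] {m : ℕ}
    (P : (Fin (m + 1) → α) → Prop) :
    Nat.card {a // P a} = ∑ c, Nat.card {b : Fin m → α // P (Fin.cons c b)} := by
  rw [← Nat.card_sigma]
  exact Nat.card_congr <|
    (Equiv.subtypeEquiv (Fin.consEquiv fun _ => α) fun _ => Iff.rfl).symm.trans
      (Equiv.subtypeProdEquivSigmaSubtype fun c b => P (Fin.cons c b))

def rookTails (m r : ℕ) (c : Fin (m + 1)) : Finset (Fin m → Fin (m + 1)) :=
  {b ∈ Fintype.piFinset fun _ => {v | (v : ℕ) ≠ r} |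
    ({v | (v : ℕ) < r} : Finset (Fin (m + 1))).erase c ⊆ univ.image b}

theorem isRookWord_cons_and_runOf_eq_iff {m r : ℕ} (c : Fin (m + 1)) (b : Fin m → Fin (m + 1))
    (hr : r ≤ m + 1) :
    IsRookWord (Fin.cons c b : Fin (m + 1) → Fin (m + 1)) ∧
        runOf (Fin.cons c b : Fin (m + 1) → Fin (m + 1)) = r ↔
      (c : ℕ) < r ∧ b ∈ rookTails m r c := by
  rw [isRookWord_and_runOf_eq_iff, runOf_eq_iff, Fin.cons_zero]
  simp only [Fin.forall_fin_succ, Fin.exists_fin_succ, Fin.cons_zero, Fin.cons_succ]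
  simp only [rookTails, mem_filter, Fintype.mem_piFinset, subset_iff, mem_erase, mem_image,
    mem_univ, true_and, ne_eq]
  constructor
  · rintro ⟨hc, hcover, -, havoid⟩
    refine ⟨hc, havoid, fun v ⟨hvc, hv⟩ => ?_⟩
    obtain hcv | ⟨i, hi⟩ := hcover v hv
    · exact absurd (Fin.ext hcv).symm hvc
    · exact ⟨i, Fin.ext hi⟩
  · rintro ⟨hc, havoid, hcover⟩
    refine ⟨hc, fun j hj => ?_, hc.ne, havoid⟩
    by_cases hcj : (c : ℕ) = j
    · exact .inl hcj
    · obtain ⟨i, hi⟩ := @hcover ⟨j, by omega⟩ ⟨fun h => hcj (by rw [← h]), hj⟩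
      exact .inr ⟨i, by rw [hi]⟩

theorem card_rookTails {m r : ℕ} {c : Fin (m + 1)} (hc : (c : ℕ) < r) (hr : r ≤ m + 1) :
    (#(rookTails m r c) : ℤ) =
      ∑ j ∈ range r, (-1) ^ j * ((r - 1).choose j : ℤ) * ((m : ℤ) - j) ^ m := by
  have hT : #(({v | (v : ℕ) < r} : Finset (Fin (m + 1))).erase c) = r - 1 := by
    rw [card_erase_of_mem (by simpa using hc), Fin.card_filter_val_lt, min_eq_right hr]
  have hTA : ({v | (v : ℕ) < r} : Finset (Fin (m + 1))).erase c ⊆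
      ({v | (v : ℕ) ≠ r} : Finset (Fin (m + 1))) := by
    intro v hv
    simp only [mem_erase, mem_filter, mem_univ, true_and] at hv ⊢
    exact hv.2.ne
  rw [rookTails, card_filter_subset_image_piFinset hTA, hT, Fintype.card_fin,
    Nat.sub_add_cancel (by omega)]
  obtain hrm | rfl := hr.lt_or_eq
  · have hA : ({v | (v : ℕ) ≠ r} : Finset (Fin (m + 1))) = univ.erase ⟨r, hrm⟩ := by
      ext v
      simp [Fin.ext_iff]
    rw [hA, card_erase_of_mem (mem_univ _), card_univ, Fintype.card_fin, Nat.add_sub_cancel]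
  · rw [Nat.add_sub_cancel, sum_range_neg_one_pow_mul_choose_mul_sub_pow,
      sum_range_neg_one_pow_mul_choose_mul_sub_pow]

theorem rw_run_count_alternating_general (n r : ℕ) (hrn : r ≤ n) :
    (Nat.card {a : Fin n → Fin n // IsRookWord a ∧ runOf a = r} : ℤ) =
    (r : ℤ) * ∑ j ∈ Finset.range r,
      (-1 : ℤ) ^ j * ((r - 1).choose j : ℤ) * ((n : ℤ) - 1 - (j : ℤ)) ^ (n - 1) := by
  obtain _ | m := n
  · obtain rfl : r = 0 := by omega
    simp [IsRookWord]
  have hfiber : ∀ c : Fin (m + 1),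
      Nat.card {b : Fin m → Fin (m + 1) //
          IsRookWord (Fin.cons c b : Fin (m + 1) → Fin (m + 1)) ∧
            runOf (Fin.cons c b : Fin (m + 1) → Fin (m + 1)) = r} =
        if (c : ℕ) < r then #(rookTails m r c) else 0 := by
    intro c
    simp_rw [isRookWord_cons_and_runOf_eq_iff c _ hrn]
    split_ifs with hc <;> simp [hc]
  rw [Fin.natCard_subtype_eq_sum_cons, Fintype.sum_congr _ _ hfiber, ← sum_filter, Nat.cast_sum,
    sum_congr rfl fun c hc => card_rookTails (mem_filter.1 hc).2 hrn, sum_const,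
    Fin.card_filter_val_lt, min_eq_right hrn, nsmul_eq_mul]
  push_cast
  simp only [add_sub_cancel_right]

theorem rw_run_count_alternating (n r : ℕ) (hr : 1 ≤ r) (hrn : r ≤ n) :
    (Nat.card {a : Fin n → Fin n // IsRookWord a ∧ runOf a = r} : ℤ) =
    (r : ℤ) * ∑ j ∈ Finset.range r,
      (-1 : ℤ) ^ j * ((r - 1).choose j : ℤ) * ((n : ℤ) - 1 - (j : ℤ)) ^ (n - 1) :=
  rw_run_count_alternating_general n r hrn

end
end

section
/- Let 1 ≤ r ≤ n be integers. Then r! · Σ (n−1)^{e_1} · (n−2)^{e_2} ⋯ (n−r)^{e_r} = r · Σ_{j=0}^{r-1} (−1)^j · binom(r−1, j) · (n−1−j)^{n−1}, where the first sum is over all r-tuples (e_1,…,e_r) of nonnegative integers with e_1 + ⋯ + e_r = n − r. -/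
open Finset

noncomputable section
open scoped Classical

/-! The left-hand side is `r! · h_{n-r}(n-1, …, n-r)`, with `h` the complete homogeneous symmetric
polynomial, and the right-hand side is `r · Δ^{r-1}(t ↦ t^{n-1})(n-r)` written out. Both agree by
the divided-difference identity `Δ^k (t ↦ t^{m+k})(y) = k! · h_m(y, y+1, …, y+k)`, which follows by
induction on `k` from `(x_last - x_0) · h_m(x) = h_{m+1}(tail x) - h_{m+1}(init x)`; the latter comes
from splitting off the first, respectively (by symmetry of `h`) the last, variable of `h_{m+1}`. -/

theorem Finset.Nat.sum_antidiagonalTuple_succ {M : Type*} [AddCommMonoid M] (k n : ℕ)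
    (f : (Fin (k + 1) → ℕ) → M) :
    ∑ e ∈ Finset.Nat.antidiagonalTuple (k + 1) n, f e =
      ∑ p ∈ antidiagonal n, ∑ e ∈ Finset.Nat.antidiagonalTuple k p.2, f (Fin.cons p.1 e) := by
  have hval : (antidiagonal n).val = (List.Nat.antidiagonal n : Multiset (ℕ × ℕ)) := rfl
  simp only [Finset.sum, Finset.Nat.antidiagonalTuple, Multiset.Nat.antidiagonalTuple,
    List.Nat.antidiagonalTuple, List.flatMap, hval, Multiset.map_coe, Multiset.sum_coe,
    List.map_flatten, List.sum_flatten, List.map_map]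
  simp [Function.comp_def]

theorem sum_alternating_choose_mul_eq_fwdDiff_iter {R : Type*} [Ring R] (f : R → R) (c : R)
    (k : ℕ) :
    ∑ j ∈ range (k + 1), (-1 : R) ^ j * k.choose j * f (c - j) = (fwdDiff 1)^[k] f (c - k) := by
  rw [fwdDiff_iter_eq_sum_shift, ← sum_range_reflect]
  refine sum_congr rfl fun j hj => ?_
  have hjk : j ≤ k := Nat.lt_succ_iff.mp (mem_range.mp hj)
  rw [Nat.add_sub_cancel, Nat.choose_symm hjk, zsmul_eq_mul, nsmul_one, Nat.cast_sub hjk,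
    sub_sub_eq_add_sub, add_sub_right_comm]
  simp

section CompleteHomogeneous

variable {R : Type*}

section CommSemiring

variable [CommSemiring R]

/-- The complete homogeneous symmetric polynomial `h_m` evaluated at `x`
(cf. `MvPolynomial.hsymm`). -/
def completeHomogeneous {r : ℕ} (x : Fin r → R) (m : ℕ) : R :=
  ∑ e ∈ Finset.Nat.antidiagonalTuple r m, ∏ i, x i ^ e i

theorem completeHomogeneous_comp_perm {r : ℕ} (x : Fin r → R) (σ : Equiv.Perm (Fin r))
    (m : ℕ) : completeHomogeneous (x ∘ σ) m = completeHomogeneous x m := by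
  refine Finset.sum_equiv (σ.arrowCongr (Equiv.refl ℕ)) (fun e => ?_) (fun e _ => ?_)
  · simp [Finset.Nat.mem_antidiagonalTuple, Equiv.sum_comp σ.symm e]
  · simpa using Equiv.prod_comp σ (fun i => x i ^ e (σ.symm i))

theorem completeHomogeneous_fin_one (x : Fin 1 → R) (m : ℕ) :
    completeHomogeneous x m = x 0 ^ m := by
  simp [completeHomogeneous]

theorem completeHomogeneous_fin_succ {r : ℕ} (x : Fin (r + 1) → R) (m : ℕ) :
    completeHomogeneous x m =
      ∑ p ∈ antidiagonal m, x 0 ^ p.1 * completeHomogeneous (Fin.tail x) p.2 := by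
  simp only [completeHomogeneous, Finset.Nat.sum_antidiagonalTuple_succ, Fin.prod_univ_succ,
    Fin.cons_zero, Fin.cons_succ, Finset.mul_sum, Fin.tail]

theorem completeHomogeneous_succ_eq_tail {r : ℕ} (x : Fin (r + 1) → R) (m : ℕ) :
    completeHomogeneous x (m + 1) =
      x 0 * completeHomogeneous x m + completeHomogeneous (Fin.tail x) (m + 1) := by
  rw [completeHomogeneous_fin_succ, Finset.Nat.sum_antidiagonal_succ,
    completeHomogeneous_fin_succ x m, Finset.mul_sum]
  simp only [pow_zero, one_mul, pow_succ', mul_assoc]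
  exact add_comm _ _

theorem completeHomogeneous_succ_eq_init {r : ℕ} (x : Fin (r + 1) → R) (m : ℕ) :
    completeHomogeneous x (m + 1) =
      x (Fin.last r) * completeHomogeneous x m + completeHomogeneous (Fin.init x) (m + 1) := by
  have h := completeHomogeneous_succ_eq_tail (x ∘ Fin.revPerm) m
  have htail : Fin.tail (x ∘ Fin.revPerm) = Fin.init x ∘ Fin.revPerm := by
    funext i
    simp [Fin.tail, Fin.init, Fin.rev_succ]
  rwa [htail, completeHomogeneous_comp_perm, completeHomogeneous_comp_perm,
    completeHomogeneous_comp_perm, Function.comp_apply, Fin.revPerm_apply, Fin.rev_zero] at h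

end CommSemiring

section CommRing

variable [CommRing R]

theorem sub_mul_completeHomogeneous {r : ℕ} (x : Fin (r + 2) → R) (m : ℕ) :
    (x (Fin.last (r + 1)) - x 0) * completeHomogeneous x m =
      completeHomogeneous (Fin.tail x) (m + 1) - completeHomogeneous (Fin.init x) (m + 1) := by
  linear_combination completeHomogeneous_succ_eq_tail x m - completeHomogeneous_succ_eq_init x m

theorem fwdDiff_iter_pow_eq_factorial_mul_completeHomogeneous (r m : ℕ) (y : R) :
    (fwdDiff 1)^[r] (fun t => t ^ (m + r)) y =
      r.factorial * completeHomogeneous (fun i : Fin (r + 1) => y + i) m := by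
  induction r generalizing m y with
  | zero => simp [completeHomogeneous_fin_one]
  | succ r ih =>
    have hstep := sub_mul_completeHomogeneous (fun i : Fin (r + 2) => y + i) m
    have htail : Fin.tail (fun i : Fin (r + 2) => y + i) = fun i : Fin (r + 1) => y + 1 + i := by
      funext i
      simp only [Fin.tail, Fin.val_succ, Nat.cast_add, Nat.cast_one]
      ring
    have hinit : Fin.init (fun i : Fin (r + 2) => y + i) = fun i : Fin (r + 1) => y + i := by
      funext i
      simp [Fin.init]
    rw [htail, hinit] at hstep
    have hexp : m + (r + 1) = m + 1 + r := by omega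
    rw [Function.iterate_succ_apply', hexp, funext (ih (m + 1)), fwdDiff, ← mul_sub, ← hstep,
      Nat.factorial_succ]
    simp only [Fin.val_last, Fin.val_zero, Nat.cast_mul, Nat.cast_add, Nat.cast_one,
      Nat.cast_zero]
    ring

end CommRing

end CompleteHomogeneous

theorem compositions_eq_alternating (n r : ℕ) (hr : 1 ≤ r) (hrn : r ≤ n) :
    ((r.factorial * ∑ e ∈ Finset.Nat.antidiagonalTuple r (n - r),
        ∏ i : Fin r, (n - 1 - (i : ℕ)) ^ e i : ℕ) : ℤ) =
    (r : ℤ) * ∑ j ∈ Finset.range r,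
      (-1 : ℤ) ^ j * ((r - 1).choose j : ℤ) * ((n : ℤ) - 1 - (j : ℤ)) ^ (n - 1) := by
  obtain ⟨k, rfl⟩ : ∃ k, r = k + 1 := ⟨r - 1, by omega⟩
  have hnodes : (fun i : Fin (k + 1) => (((n - 1 - i : ℕ) : ℤ))) =
      (fun i : Fin (k + 1) => (n - 1 - k : ℤ) + i) ∘ Fin.revPerm := by
    funext i
    have := i.isLt
    simp only [Function.comp_apply, Fin.revPerm_apply, Fin.val_rev]
    omega
  have hlhs : ((∑ e ∈ Finset.Nat.antidiagonalTuple (k + 1) (n - (k + 1)),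
        ∏ i : Fin (k + 1), (n - 1 - (i : ℕ)) ^ e i : ℕ) : ℤ) =
      completeHomogeneous (fun i : Fin (k + 1) => (n - 1 - k : ℤ) + i) (n - (k + 1)) := by
    rw [← completeHomogeneous_comp_perm _ Fin.revPerm, ← hnodes, completeHomogeneous]
    push_cast only [Nat.cast_sum, Nat.cast_prod, Nat.cast_pow]
  have hdiff := fwdDiff_iter_pow_eq_factorial_mul_completeHomogeneous k (n - (k + 1))
    ((n : ℤ) - 1 - k)
  rw [(by omega : n - (k + 1) + k = n - 1)] at hdiff
  rw [Nat.add_sub_cancel, sum_alternating_choose_mul_eq_fwdDiff_iter (fun t : ℤ => t ^ (n - 1)),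
    hdiff, Nat.cast_mul, hlhs, Nat.factorial_succ]
  push_cast
  ring

end
end
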